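/- For all integers k ≥ 0 and a ≥ 0, in K[B] one has B_odd^{(2k)} · B_odd^{(2a+1)} = [2k+2a+1 choose 2k] · ( B_odd^{(2k+2a+1)} + Σ_{ℓ=1}^{k} ( ∏_{m=1}^{ℓ} [2a−2m+2]·[2k−2m+2] / ( [2k+2a−2m+3]·[2m] ) ) · (qς)^{ℓ} · B_odd^{(2k+2a−2ℓ+1)} ). -/

import Mathlib

noncomputable section

open Polynomial Finset

abbrev Kq : Type := RatFunc ℚ

/-- The variable `q` in `ℚ(q)`. -/
def qq : Kq := RatFunc.X

/-- The quantum integer `[n] = (q^n - q^{-n})/(q - q^{-1})` for `n : ℤ`. -/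
def qint (n : ℤ) : Kq := (qq ^ n - qq ^ (-n)) / (qq - qq⁻¹)

/-- The quantum factorial `[n]! = ∏_{i=1}^n [i]`. -/
def qfact (n : ℕ) : Kq := ∏ i ∈ Finset.range n, qint ((i : ℤ) + 1)

/-- The quantum binomial `[n choose m] = [n]!/([m]!·[n-m]!)`. -/
def qbinom (n m : ℕ) : Kq := qfact n / (qfact m * qfact (n - m))

/-- The even ı-divided power `B_ev^{(n)}` in `K[B]`. -/
def BevP (ς : Kq) (n : ℕ) : Polynomial Kq :=
  if Even n then
    Polynomial.C (qfact n)⁻¹ *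
      ∏ j ∈ Finset.range (n / 2),
        ((Polynomial.X : Polynomial Kq) ^ 2 - Polynomial.C (qq * ς * (qint (2 * (j : ℤ))) ^ 2))
  else
    Polynomial.C (qfact n)⁻¹ *
      (Polynomial.X *
        ∏ j ∈ Finset.range (n / 2),
          ((Polynomial.X : Polynomial Kq) ^ 2 - Polynomial.C (qq * ς * (qint (2 * (j : ℤ) + 2)) ^ 2)))

/-- The odd ı-divided power `B_odd^{(n)}` in `K[B]`. -/
def BoddP (ς : Kq) (n : ℕ) : Polynomial Kq :=
  if Even n then
    Polynomial.C (qfact n)⁻¹ *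
      ∏ j ∈ Finset.range (n / 2),
        ((Polynomial.X : Polynomial Kq) ^ 2 - Polynomial.C (qq * ς * (qint (2 * (j : ℤ) + 1)) ^ 2))
  else
    Polynomial.C (qfact n)⁻¹ *
      (Polynomial.X *
        ∏ j ∈ Finset.range (n / 2),
          ((Polynomial.X : Polynomial Kq) ^ 2 - Polynomial.C (qq * ς * (qint (2 * (j : ℤ) + 1)) ^ 2)))

-- foundations
lemma qq_ne_zero : qq ≠ 0 := RatFunc.X_ne_zero

lemma qq_pow_ne_one (n : ℕ) (h : 0 < n) : (qq : Kq) ^ n ≠ 1 := by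
  intro he
  have : (Polynomial.X : Polynomial ℚ) ^ n = 1 := by
    apply_fun (algebraMap (Polynomial ℚ) Kq)
    · simpa [qq, RatFunc.algebraMap_X] using he
    · exact IsFractionRing.injective _ _
  have := congrArg Polynomial.natDegree this
  simp [Polynomial.natDegree_X_pow] at this
  omega

lemma qq_zpow_ne_one (n : ℤ) (h : n ≠ 0) : (qq : Kq) ^ n ≠ 1 := by
  rcases lt_or_gt_of_ne h with h' | h'
  · intro he
    have : (qq : Kq) ^ (-n) = 1 := by rw [zpow_neg, he, inv_one]
    rw [show (-n) = ((-n).toNat : ℤ) by omega, zpow_natCast] at this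
    exact qq_pow_ne_one _ (by omega) this
  · intro he
    rw [show n = (n.toNat : ℤ) by omega, zpow_natCast] at he
    exact qq_pow_ne_one _ (by omega) he

lemma dq_ne_zero : qq - qq⁻¹ ≠ 0 := by
  intro h
  have h1 := sub_eq_zero.mp h
  have h2 : (qq:Kq) ^ (2:ℤ) = 1 := by
    have : qq * qq = 1 := by nth_rewrite 1 [h1]; simp [qq_ne_zero]
    rw [zpow_two]; exact this
  exact qq_zpow_ne_one 2 (by norm_num) h2

lemma qint_ne_zero (n : ℤ) (h : n ≠ 0) : qint n ≠ 0 := by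
  unfold qint
  apply div_ne_zero _ dq_ne_zero
  intro he
  have heq := sub_eq_zero.mp he
  have hq := qq_ne_zero
  have h2 : (qq:Kq) ^ (2*n) = 1 := by
    have h3 : (qq:Kq) ^ n * qq ^ (-n) = 1 := by rw [← zpow_add₀ hq]; simp
    rw [two_mul, zpow_add₀ hq]
    nth_rewrite 2 [heq]
    exact h3
  exact qq_zpow_ne_one _ (by omega) h2

lemma qint_zero : qint 0 = 0 := by simp [qint]

lemma qfact_ne_zero (n : ℕ) : qfact n ≠ 0 := by
  rw [qfact, Finset.prod_ne_zero_iff]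
  exact fun i _ => qint_ne_zero _ (by omega)

lemma qint_eq (n : ℤ) : qint n = (qq ^ n - (qq ^ n)⁻¹) / (qq - qq⁻¹) := by
  rw [qint, zpow_neg]

lemma qint_mul_qint (m n : ℤ) :
    qint m * qint n
      = (qq ^ m - (qq ^ m)⁻¹) * (qq ^ n - (qq ^ n)⁻¹) / (qq - qq⁻¹) ^ 2 := by
  rw [qint_eq, qint_eq, div_mul_div_comm, sq]

lemma br1 (W : Kq) (hW : W ≠ 0) : W - W⁻¹ = (W*W - 1)/W := by field_simp

lemma br2 (a b : Kq) (ha : a ≠ 0) (hb : b ≠ 0) :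
    a/b - (a/b)⁻¹ = (a*a - b*b)/(a*b) := by
  rw [inv_div, div_sub_div _ _ hb ha]; ring_nf

lemma key_abs (X Y Z Q : Kq) (hX : X ≠ 0) (hY : Y ≠ 0) (hZ : Z ≠ 0) (hQ : Q ≠ 0) :
    (X - X⁻¹) * (Y - Y⁻¹) + (Z - Z⁻¹) * (X*Y*Z - (X*Y*Z)⁻¹)
      = (X*Q⁻¹ - (X*Q⁻¹)⁻¹) * (Y*Q⁻¹ - (Y*Q⁻¹)⁻¹)
        + (Q*Z - (Q*Z)⁻¹) * (X*Y*Z*Q⁻¹ - (X*Y*Z*Q⁻¹)⁻¹) := by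
  have hXYZ : X*Y*Z ≠ 0 := by simp [hX, hY, hZ]
  have hQZ : Q*Z ≠ 0 := mul_ne_zero hQ hZ
  rw [← div_eq_mul_inv X Q, ← div_eq_mul_inv Y Q, ← div_eq_mul_inv (X*Y*Z) Q]
  rw [br1 X hX, br1 Y hY, br1 Z hZ, br1 _ hXYZ, br1 _ hQZ,
    br2 X Q hX hQ, br2 Y Q hY hQ, br2 (X*Y*Z) Q hXYZ hQ]
  rw [div_mul_div_comm, div_mul_div_comm, div_mul_div_comm, div_mul_div_comm]
  rw [div_add_div _ _ (by simp [hX,hY]) (by simp [hX,hY,hZ]),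
      div_add_div _ _ (by simp [hX,hY,hQ]) (by simp [hX,hY,hZ,hQ]),
      div_eq_div_iff (by simp [hX,hY,hZ]) (by simp [hX,hY,hZ,hQ])]
  ring

lemma sqq_abs (X Y : Kq) (hX : X ≠ 0) (hY : Y ≠ 0) :
    (X - X⁻¹) * (X - X⁻¹) - (Y - Y⁻¹) * (Y - Y⁻¹)
      = (X*Y - (X*Y)⁻¹) * (X*Y⁻¹ - (X*Y⁻¹)⁻¹) := by
  have hXY : X*Y ≠ 0 := mul_ne_zero hX hY
  rw [← div_eq_mul_inv X Y]
  rw [br1 X hX, br1 Y hY, br1 _ hXY, br2 X Y hX hY]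
  rw [div_mul_div_comm, div_mul_div_comm, div_mul_div_comm]
  rw [div_sub_div _ _ (by simp [hX]) (by simp [hY]),
      div_eq_div_iff (by simp [hX,hY]) (by simp [hX,hY])]
  ring

lemma qint_key (s u v : ℤ) :
    qint s * qint u + qint v * qint (s+u+v)
      = qint (s-2) * qint (u-2) + qint (v+2) * qint (s+u+v-2) := by
  have hq := qq_ne_zero
  simp only [qint_mul_qint]
  rw [← add_div, ← add_div]
  congr 1
  have e2 : ∀ w : ℤ, (qq:Kq) ^ (w - 2) = qq ^ w * ((qq:Kq)^(2:ℤ))⁻¹ := by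
    intro w; rw [zpow_sub₀ hq, div_eq_mul_inv]
  have e3 : ∀ w : ℤ, (qq:Kq) ^ (w + 2) = (qq:Kq)^(2:ℤ) * qq ^ w := by
    intro w; rw [zpow_add₀ hq, mul_comm]
  rw [e2 s, e2 u, e2 (s+u+v), e3 v, zpow_add₀ hq (s+u) v, zpow_add₀ hq s u]
  exact key_abs _ _ _ _ (zpow_ne_zero _ hq) (zpow_ne_zero _ hq) (zpow_ne_zero _ hq)
    (zpow_ne_zero _ hq)

lemma qint_sq_diff (x y : ℤ) :
    qint x ^ 2 - qint y ^ 2 = qint (x+y) * qint (x-y) := by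
  have hq := qq_ne_zero
  simp only [sq, qint_mul_qint]
  rw [div_sub_div_same]
  congr 1
  rw [zpow_add₀ hq, zpow_sub₀ hq, div_eq_mul_inv ((qq:Kq)^x) ((qq:Kq)^y)]
  exact sqq_abs _ _ (zpow_ne_zero _ hq) (zpow_ne_zero _ hq)

-- scalar layer
def NN (k a ℓ : ℕ) : Kq :=
  ∏ m ∈ Finset.Icc 1 ℓ,
    (qint (2*(k:ℤ)+2*(a:ℤ)-2*(m:ℤ)+2) * qint (2*(a:ℤ)-2*(m:ℤ)+2) * qint (2*(k:ℤ)-2*(m:ℤ)+2))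

def DD (ℓ : ℕ) : Kq := ∏ m ∈ Finset.Icc 1 ℓ, qint (2*(m:ℤ))

def dprod (k a ℓ : ℕ) : Kq :=
  ∏ m ∈ Finset.Icc 1 ℓ,
    (qint (2 * (a : ℤ) - 2 * (m : ℤ) + 2) * qint (2 * (k : ℤ) - 2 * (m : ℤ) + 2)) /
      (qint (2 * (k : ℤ) + 2 * (a : ℤ) - 2 * (m : ℤ) + 3) * qint (2 * (m : ℤ)))

lemma NN_zero (k a : ℕ) : NN k a 0 = 1 := by simp [NN]
lemma DD_zero : DD 0 = 1 := by simp [DD]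
lemma dprod_zero (k a : ℕ) : dprod k a 0 = 1 := by simp [dprod]

lemma DD_ne_zero (ℓ : ℕ) : DD ℓ ≠ 0 := by
  rw [DD, Finset.prod_ne_zero_iff]
  intro m hm
  rw [Finset.mem_Icc] at hm
  exact qint_ne_zero _ (by omega)

lemma NN_succ (k a ℓ : ℕ) :
    NN k a (ℓ+1) = NN k a ℓ *
      (qint (2*(k:ℤ)+2*(a:ℤ)-2*(ℓ:ℤ)) * qint (2*(a:ℤ)-2*(ℓ:ℤ)) * qint (2*(k:ℤ)-2*(ℓ:ℤ))) := by
  rw [NN, NN, Finset.prod_Icc_succ_top (by omega : 1 ≤ ℓ+1),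
    show 2*(k:ℤ)+2*(a:ℤ)-2*((ℓ+1:ℕ):ℤ)+2 = 2*(k:ℤ)+2*(a:ℤ)-2*(ℓ:ℤ) by push_cast; ring,
    show 2*(a:ℤ)-2*((ℓ+1:ℕ):ℤ)+2 = 2*(a:ℤ)-2*(ℓ:ℤ) by push_cast; ring,
    show 2*(k:ℤ)-2*((ℓ+1:ℕ):ℤ)+2 = 2*(k:ℤ)-2*(ℓ:ℤ) by push_cast; ring]

lemma DD_succ (ℓ : ℕ) : DD (ℓ+1) = DD ℓ * qint (2*(ℓ:ℤ)+2) := by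
  rw [DD, DD, Finset.prod_Icc_succ_top (by omega : 1 ≤ ℓ+1),
    show 2*((ℓ+1:ℕ):ℤ) = 2*(ℓ:ℤ)+2 by push_cast; ring]

lemma dprod_succ (k a ℓ : ℕ) :
    dprod k a (ℓ+1) = dprod k a ℓ *
      ((qint (2*(a:ℤ)-2*(ℓ:ℤ)) * qint (2*(k:ℤ)-2*(ℓ:ℤ))) /
        (qint (2*(k:ℤ)+2*(a:ℤ)-2*(ℓ:ℤ)+1) * qint (2*(ℓ:ℤ)+2))) := by
  rw [dprod, dprod, Finset.prod_Icc_succ_top (by omega : 1 ≤ ℓ+1),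
    show 2*(a:ℤ)-2*((ℓ+1:ℕ):ℤ)+2 = 2*(a:ℤ)-2*(ℓ:ℤ) by push_cast; ring,
    show 2*(k:ℤ)-2*((ℓ+1:ℕ):ℤ)+2 = 2*(k:ℤ)-2*(ℓ:ℤ) by push_cast; ring,
    show 2*(k:ℤ)+2*(a:ℤ)-2*((ℓ+1:ℕ):ℤ)+3 = 2*(k:ℤ)+2*(a:ℤ)-2*(ℓ:ℤ)+1 by push_cast; ring,
    show 2*((ℓ+1:ℕ):ℤ) = 2*(ℓ:ℤ)+2 by push_cast; ring]

lemma NN_top_zero (k a : ℕ) : NN k a (k+1) = 0 := by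
  rw [NN]
  apply Finset.prod_eq_zero (Finset.mem_Icc.mpr ⟨by omega, le_refl (k+1)⟩)
  rw [show 2*(k:ℤ)-2*((k+1:ℕ):ℤ)+2 = 0 by push_cast; ring, qint_zero, mul_zero]

lemma scalar_step (s t u v : ℤ) :
    (qint s * qint (t+2) * qint u) * (qint s * qint t * qint u)
      + (qint v * qint (s+u+v) * qint (t+2)) * (qint s * qint t * qint u)
    = (qint s * qint (t+2) * qint u) * (qint (s-2) * qint t * qint (u-2))
      + (qint s * qint (t+2) * qint u) * (qint (v+2) * qint (s+u+v-2) * qint t) := by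
  linear_combination (qint s * qint t * qint (t+2) * qint u) * qint_key s u v

lemma NREC (k a : ℕ) : ∀ ℓ : ℕ,
    NN (k+1) a (ℓ+1) = NN k a (ℓ+1) +
      NN k a ℓ * (qint (2*(ℓ:ℤ)+2) * qint (4*(k:ℤ)+2*(a:ℤ)-2*(ℓ:ℤ)+2) * qint (2*(a:ℤ)-2*(ℓ:ℤ))) := by
  intro ℓ
  induction ℓ with
  | zero =>
    rw [NN_succ, NN_succ, NN_zero, NN_zero]
    have h := qint_key (2*(k:ℤ)+2*(a:ℤ)+2) (2*(k:ℤ)+2) 0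
    rw [qint_zero,
      show (2*(k:ℤ)+2*(a:ℤ)+2)-2 = 2*(k:ℤ)+2*(a:ℤ) by ring,
      show (2*(k:ℤ)+2)-2 = 2*(k:ℤ) by ring,
      show (2*(k:ℤ)+2*(a:ℤ)+2)+(2*(k:ℤ)+2)+0-2 = 4*(k:ℤ)+2*(a:ℤ)+2 by ring,
      show (0:ℤ)+2 = 2 by ring] at h
    rw [show ((0:ℕ):ℤ) = (0:ℤ) by simp,
      show 2*((k+1:ℕ):ℤ)+2*(a:ℤ)-2*(0:ℤ) = 2*(k:ℤ)+2*(a:ℤ)+2 by push_cast; ring,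
      show 2*(a:ℤ)-2*(0:ℤ) = 2*(a:ℤ) by ring,
      show 2*((k+1:ℕ):ℤ)-2*(0:ℤ) = 2*(k:ℤ)+2 by push_cast; ring,
      show 2*(k:ℤ)+2*(a:ℤ)-2*(0:ℤ) = 2*(k:ℤ)+2*(a:ℤ) by ring,
      show 2*(k:ℤ)-2*(0:ℤ) = 2*(k:ℤ) by ring,
      show 2*(0:ℤ)+2 = (2:ℤ) by ring,
      show 4*(k:ℤ)+2*(a:ℤ)-2*(0:ℤ)+2 = 4*(k:ℤ)+2*(a:ℤ)+2 by ring]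
    linear_combination qint (2*(a:ℤ)) * h
  | succ ℓ ih =>
    rw [NN_succ (k+1) a (ℓ+1), NN_succ k a (ℓ+1), ih, NN_succ k a ℓ]
    have h := scalar_step (2*(k:ℤ)+2*(a:ℤ)-2*(ℓ:ℤ)) (2*(a:ℤ)-2*(ℓ:ℤ)-2) (2*(k:ℤ)-2*(ℓ:ℤ)) (2*(ℓ:ℤ)+2)
    rw [show (2*(a:ℤ)-2*(ℓ:ℤ)-2)+2 = 2*(a:ℤ)-2*(ℓ:ℤ) by ring,
      show (2*(k:ℤ)+2*(a:ℤ)-2*(ℓ:ℤ))+(2*(k:ℤ)-2*(ℓ:ℤ))+(2*(ℓ:ℤ)+2) = 4*(k:ℤ)+2*(a:ℤ)-2*(ℓ:ℤ)+2 by ring,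
      show (2*(k:ℤ)+2*(a:ℤ)-2*(ℓ:ℤ))-2 = 2*(k:ℤ)+2*(a:ℤ)-2*((ℓ:ℤ)+1) by ring,
      show (2*(k:ℤ)-2*(ℓ:ℤ))-2 = 2*(k:ℤ)-2*((ℓ:ℤ)+1) by ring,
      show (2*(ℓ:ℤ)+2)+2 = 2*((ℓ:ℤ)+1)+2 by ring,
      show (4*(k:ℤ)+2*(a:ℤ)-2*(ℓ:ℤ)+2)-2 = 4*(k:ℤ)+2*(a:ℤ)-2*((ℓ:ℤ)+1)+2 by ring] at h
    rw [show ((ℓ+1:ℕ):ℤ) = (ℓ:ℤ)+1 by push_cast; ring,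
      show 2*((k+1:ℕ):ℤ)+2*(a:ℤ)-2*((ℓ:ℤ)+1) = 2*(k:ℤ)+2*(a:ℤ)-2*(ℓ:ℤ) by push_cast; ring,
      show 2*((k+1:ℕ):ℤ)-2*((ℓ:ℤ)+1) = 2*(k:ℤ)-2*(ℓ:ℤ) by push_cast; ring,
      show 2*(a:ℤ)-2*((ℓ:ℤ)+1) = 2*(a:ℤ)-2*(ℓ:ℤ)-2 by ring]
    linear_combination (NN k a ℓ) * h

lemma qfact_succ (n : ℕ) : qfact (n+1) = qfact n * qint ((n:ℤ)+1) := by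
  rw [qfact, qfact, Finset.prod_range_succ]

lemma qfact_ratio (k a : ℕ) : ∀ ℓ : ℕ, ℓ ≤ k →
    qfact (2*k+2*a+1) = qfact (2*(k+a-ℓ)+1) *
      ∏ m ∈ Finset.Icc 1 ℓ,
        (qint (2*(k:ℤ)+2*(a:ℤ)-2*(m:ℤ)+2) * qint (2*(k:ℤ)+2*(a:ℤ)-2*(m:ℤ)+3)) := by
  intro ℓ
  induction ℓ with
  | zero =>
    intro _
    rw [show k+a-0 = k+a from rfl, show 2*(k+a)+1 = 2*k+2*a+1 by omega]
    simp
  | succ ℓ ih =>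
    intro h
    rw [ih (by omega)]
    rw [Finset.prod_Icc_succ_top (by omega : 1 ≤ ℓ+1)]
    rw [show 2*(k+a-ℓ)+1 = (2*(k+a-(ℓ+1))+1)+1+1 by omega, qfact_succ, qfact_succ]
    rw [show ((2*(k+a-(ℓ+1))+1:ℕ):ℤ)+1 = 2*(k:ℤ)+2*(a:ℤ)-2*((ℓ+1:ℕ):ℤ)+2 by omega,
      show ((2*(k+a-(ℓ+1))+1+1:ℕ):ℤ)+1 = 2*(k:ℤ)+2*(a:ℤ)-2*((ℓ+1:ℕ):ℤ)+3 by omega]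
    ring

lemma coeff_eq (k a ℓ : ℕ) (h : ℓ ≤ k) :
    (qfact (2*k))⁻¹ * (qfact (2*a+1))⁻¹ * (NN k a ℓ / DD ℓ)
      = qbinom (2*k+2*a+1) (2*k) * dprod k a ℓ * (qfact (2*(k+a-ℓ)+1))⁻¹ := by
  have key : NN k a ℓ / DD ℓ
      = (∏ m ∈ Finset.Icc 1 ℓ,
          (qint (2*(k:ℤ)+2*(a:ℤ)-2*(m:ℤ)+2) * qint (2*(k:ℤ)+2*(a:ℤ)-2*(m:ℤ)+3)))
        * dprod k a ℓ := by
    rw [NN, DD, dprod, ← Finset.prod_div_distrib, ← Finset.prod_mul_distrib]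
    apply Finset.prod_congr rfl
    intro m hm
    rw [Finset.mem_Icc] at hm
    have h3 : qint (2*(k:ℤ)+2*(a:ℤ)-2*(m:ℤ)+3) ≠ 0 := qint_ne_zero _ (by omega)
    have h2m : qint (2*(m:ℤ)) ≠ 0 := qint_ne_zero _ (by omega)
    field_simp
  rw [key, qbinom, show 2*k+2*a+1-2*k = 2*a+1 by omega, qfact_ratio k a ℓ h]
  have f1 := qfact_ne_zero (2*k)
  have f2 := qfact_ne_zero (2*a+1)
  have f3 := qfact_ne_zero (2*(k+a-ℓ)+1)
  field_simp

-- polynomial layer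
def PP (ς : Kq) (j : ℕ) : Polynomial Kq :=
  (Polynomial.X : Polynomial Kq)^2 - Polynomial.C (qq * ς * (qint (2*(j:ℤ)+1))^2)

def cc (ς : Kq) (k a ℓ : ℕ) : Kq := NN k a ℓ / DD ℓ * (qq*ς)^ℓ

lemma cc_zero (ς : Kq) (k a : ℕ) : cc ς k a 0 = 1 := by
  simp [cc, NN_zero, DD_zero]

lemma cc_top_zero (ς : Kq) (k a : ℕ) : cc ς k a (k+1) = 0 := by
  simp [cc, NN_top_zero]

lemma Pmul (ς : Kq) (k u : ℕ) :
    PP ς k * ∏ j ∈ Finset.range u, PP ς j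
      = (∏ j ∈ Finset.range (u+1), PP ς j)
        + Polynomial.C (qq*ς*(qint (2*(u:ℤ)+2*(k:ℤ)+2) * qint (2*(u:ℤ)-2*(k:ℤ))))
            * ∏ j ∈ Finset.range u, PP ς j := by
  have hd : PP ς k = PP ς u
      + Polynomial.C (qq*ς*(qint (2*(u:ℤ)+2*(k:ℤ)+2) * qint (2*(u:ℤ)-2*(k:ℤ)))) := by
    rw [PP, PP,
      show qq*ς*(qint (2*(u:ℤ)+2*(k:ℤ)+2) * qint (2*(u:ℤ)-2*(k:ℤ)))
          = qq*ς*(qint (2*(u:ℤ)+1))^2 - qq*ς*(qint (2*(k:ℤ)+1))^2 from by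
        rw [show (2*(u:ℤ)+2*(k:ℤ)+2) = (2*(u:ℤ)+1)+(2*(k:ℤ)+1) by ring,
          show (2*(u:ℤ)-2*(k:ℤ)) = (2*(u:ℤ)+1)-(2*(k:ℤ)+1) by ring,
          ← qint_sq_diff]
        ring,
      map_sub]
    ring
  rw [hd, Finset.prod_range_succ]
  ring

lemma RECc (ς : Kq) (k a ℓ : ℕ) :
    cc ς (k+1) a (ℓ+1) = cc ς k a (ℓ+1)
      + cc ς k a ℓ * (qq*ς*(qint (4*(k:ℤ)+2*(a:ℤ)-2*(ℓ:ℤ)+2) * qint (2*(a:ℤ)-2*(ℓ:ℤ)))) := by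
  rw [cc, cc, cc, NREC k a ℓ, DD_succ, pow_succ]
  have h1 := DD_ne_zero ℓ
  have h2 : qint (2*(ℓ:ℤ)+2) ≠ 0 := qint_ne_zero _ (by omega)
  field_simp

lemma core (ς : Kq) (k a : ℕ) :
    (∏ j ∈ Finset.range k, PP ς j) * (∏ j ∈ Finset.range a, PP ς j)
      = ∑ ℓ ∈ Finset.range (k+1),
          Polynomial.C (cc ς k a ℓ) * ∏ j ∈ Finset.range (k+a-ℓ), PP ς j := by
  induction k with
  | zero => simp [cc_zero]
  | succ k ih =>
    rw [Finset.prod_range_succ,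
      show (∏ j ∈ Finset.range k, PP ς j) * PP ς k * (∏ j ∈ Finset.range a, PP ς j)
        = PP ς k * ((∏ j ∈ Finset.range k, PP ς j) * (∏ j ∈ Finset.range a, PP ς j)) from by
          ring,
      ih, Finset.mul_sum]
    have step1 : ∀ ℓ ∈ Finset.range (k+1),
        PP ς k * (Polynomial.C (cc ς k a ℓ) * ∏ j ∈ Finset.range (k+a-ℓ), PP ς j)
        = Polynomial.C (cc ς k a ℓ) * (∏ j ∈ Finset.range (k+1+a-ℓ), PP ς j)
          + Polynomial.C (cc ς k a ℓ
              * (qq*ς*(qint (4*(k:ℤ)+2*(a:ℤ)-2*(ℓ:ℤ)+2) * qint (2*(a:ℤ)-2*(ℓ:ℤ)))))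
            * ∏ j ∈ Finset.range (k+a-ℓ), PP ς j := by
      intro ℓ hℓ
      rw [Finset.mem_range] at hℓ
      rw [show PP ς k * (Polynomial.C (cc ς k a ℓ) * ∏ j ∈ Finset.range (k+a-ℓ), PP ς j)
          = Polynomial.C (cc ς k a ℓ) * (PP ς k * ∏ j ∈ Finset.range (k+a-ℓ), PP ς j) from by
            ring,
        Pmul ς k (k+a-ℓ),
        show 2*((k+a-ℓ:ℕ):ℤ)+2*(k:ℤ)+2 = 4*(k:ℤ)+2*(a:ℤ)-2*(ℓ:ℤ)+2 by omega,
        show 2*((k+a-ℓ:ℕ):ℤ)-2*(k:ℤ) = 2*(a:ℤ)-2*(ℓ:ℤ) by omega,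
        show k+a-ℓ+1 = k+1+a-ℓ by omega,
        mul_add, ← mul_assoc, ← map_mul]
    rw [Finset.sum_congr rfl step1, Finset.sum_add_distrib]
    have hS1 : (∑ ℓ ∈ Finset.range (k+2),
          Polynomial.C (cc ς k a ℓ) * ∏ j ∈ Finset.range (k+1+a-ℓ), PP ς j)
        = ∑ ℓ ∈ Finset.range (k+1),
          Polynomial.C (cc ς k a ℓ) * ∏ j ∈ Finset.range (k+1+a-ℓ), PP ς j := by
      rw [Finset.sum_range_succ, cc_top_zero, map_zero, zero_mul, add_zero]
    rw [← hS1,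
      Finset.sum_range_succ' (fun ℓ => Polynomial.C (cc ς k a ℓ)
        * ∏ j ∈ Finset.range (k+1+a-ℓ), PP ς j) (k+1),
      Finset.sum_range_succ' (fun ℓ => Polynomial.C (cc ς (k+1) a ℓ)
        * ∏ j ∈ Finset.range (k+1+a-ℓ), PP ς j) (k+1)]
    simp only [cc_zero, map_one, one_mul]
    rw [add_right_comm, ← Finset.sum_add_distrib]
    congr 1
    apply Finset.sum_congr rfl
    intro ℓ hℓ
    rw [Finset.mem_range] at hℓ
    rw [show k+1+a-(ℓ+1) = k+a-ℓ by omega, RECc ς k a ℓ, map_add, add_mul]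


-- final assembly helpers
lemma Bodd_even (ς : Kq) (k : ℕ) :
    BoddP ς (2*k) = Polynomial.C (qfact (2*k))⁻¹ * ∏ j ∈ Finset.range k, PP ς j := by
  rw [BoddP, if_pos (even_two_mul k), show 2*k/2 = k by omega]
  rfl

lemma Bodd_odd (ς : Kq) (n : ℕ) :
    BoddP ς (2*n+1)
      = Polynomial.C (qfact (2*n+1))⁻¹ * (Polynomial.X * ∏ j ∈ Finset.range n, PP ς j) := by
  rw [BoddP, if_neg (by simp [Nat.even_add_one, parity_simps]), show (2*n+1)/2 = n by omega]
  rfl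

lemma range_split {M : Type*} [AddCommMonoid M] (f : ℕ → M) (n : ℕ) :
    ∑ ℓ ∈ Finset.range (n+1), f ℓ = f 0 + ∑ ℓ ∈ Finset.Icc 1 n, f ℓ := by
  rw [Finset.range_eq_Ico, Finset.sum_eq_sum_Ico_succ_bot (by omega)]
  congr 1

/-- Multiplication formula `B_odd^{(2k)} B_odd^{(2a+1)}`. -/
theorem Bodd_mul_even_odd (ς : Kq) (hς : ς ≠ 0) (k a : ℕ) :
    BoddP ς (2 * k) * BoddP ς (2 * a + 1) =
    Polynomial.C (qbinom (2 * k + 2 * a + 1) (2 * k)) *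
      (BoddP ς (2 * k + 2 * a + 1) +
        ∑ ℓ ∈ Finset.Icc 1 k,
          Polynomial.C ((∏ m ∈ Finset.Icc 1 ℓ,
              (qint (2 * (a : ℤ) - 2 * (m : ℤ) + 2) * qint (2 * (k : ℤ) - 2 * (m : ℤ) + 2)) /
                (qint (2 * (k : ℤ) + 2 * (a : ℤ) - 2 * (m : ℤ) + 3) * qint (2 * (m : ℤ)))) *
            (qq * ς) ^ ℓ) *
          BoddP ς (2 * k + 2 * a - 2 * ℓ + 1)) := by
  -- LHS into sum form
  have hL : BoddP ς (2*k) * BoddP ς (2*a+1)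
      = ∑ ℓ ∈ Finset.range (k+1),
          Polynomial.C ((qfact (2*k))⁻¹ * (qfact (2*a+1))⁻¹ * cc ς k a ℓ) *
            (Polynomial.X * ∏ j ∈ Finset.range (k+a-ℓ), PP ς j) := by
    rw [Bodd_even, Bodd_odd,
      show (Polynomial.C (qfact (2*k))⁻¹ * ∏ j ∈ Finset.range k, PP ς j) *
          (Polynomial.C (qfact (2*a+1))⁻¹ *
            (Polynomial.X * ∏ j ∈ Finset.range a, PP ς j))
        = Polynomial.C (qfact (2*k))⁻¹ * Polynomial.C (qfact (2*a+1))⁻¹ *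
            (Polynomial.X *
              ((∏ j ∈ Finset.range k, PP ς j) * (∏ j ∈ Finset.range a, PP ς j))) from by ring,
      core ς k a, Finset.mul_sum, Finset.mul_sum]
    apply Finset.sum_congr rfl
    intro ℓ _
    rw [map_mul, map_mul]
    ring
  -- RHS BoddP rewrites
  have hhead : BoddP ς (2*k+2*a+1)
      = Polynomial.C (qfact (2*(k+a)+1))⁻¹ *
          (Polynomial.X * ∏ j ∈ Finset.range (k+a), PP ς j) := by
    rw [show 2*k+2*a+1 = 2*(k+a)+1 by omega, Bodd_odd]
  have hsum : ∀ ℓ ∈ Finset.Icc 1 k,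
      Polynomial.C ((∏ m ∈ Finset.Icc 1 ℓ,
          (qint (2 * (a : ℤ) - 2 * (m : ℤ) + 2) * qint (2 * (k : ℤ) - 2 * (m : ℤ) + 2)) /
            (qint (2 * (k : ℤ) + 2 * (a : ℤ) - 2 * (m : ℤ) + 3) * qint (2 * (m : ℤ)))) *
        (qq * ς) ^ ℓ) * BoddP ς (2 * k + 2 * a - 2 * ℓ + 1)
      = Polynomial.C (dprod k a ℓ * (qq * ς) ^ ℓ) *
          (Polynomial.C (qfact (2*(k+a-ℓ)+1))⁻¹ *
            (Polynomial.X * ∏ j ∈ Finset.range (k+a-ℓ), PP ς j)) := by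
    intro ℓ hℓ
    rw [Finset.mem_Icc] at hℓ
    rw [show 2*k+2*a-2*ℓ+1 = 2*(k+a-ℓ)+1 by omega, Bodd_odd, ← dprod]
  rw [hL, hhead, Finset.sum_congr rfl hsum,
    range_split (fun ℓ => Polynomial.C ((qfact (2*k))⁻¹ * (qfact (2*a+1))⁻¹ * cc ς k a ℓ) *
      (Polynomial.X * ∏ j ∈ Finset.range (k+a-ℓ), PP ς j)) k,
    mul_add, Finset.mul_sum]
  congr 1
  · -- head terms, ℓ = 0
    have hs : (qfact (2*k))⁻¹ * (qfact (2*a+1))⁻¹ * cc ς k a 0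
        = qbinom (2*k+2*a+1) (2*k) * (qfact (2*(k+a)+1))⁻¹ := by
      rw [cc_zero, mul_one, qbinom, show 2*k+2*a+1-2*k = 2*a+1 by omega,
        show 2*(k+a)+1 = 2*k+2*a+1 by omega]
      have f1 := qfact_ne_zero (2*k)
      have f2 := qfact_ne_zero (2*a+1)
      have f3 := qfact_ne_zero (2*k+2*a+1)
      field_simp
    rw [show k+a-0 = k+a from rfl, hs]
    simp only [map_mul]
    ring
  · apply Finset.sum_congr rfl
    intro ℓ hℓ
    rw [Finset.mem_Icc] at hℓ
    have hs2 : (qfact (2*k))⁻¹ * (qfact (2*a+1))⁻¹ * cc ς k a ℓ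
        = qbinom (2*k+2*a+1) (2*k) * (dprod k a ℓ * (qq * ς) ^ ℓ) *
            (qfact (2*(k+a-ℓ)+1))⁻¹ := by
      rw [cc]
      linear_combination ((qq * ς) ^ ℓ) * coeff_eq k a ℓ hℓ.2
    rw [hs2]
    simp only [map_mul]
    ring
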